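/- arXiv:0806.1117 — 4 statements merged into one kernel-verified Lean document; each statement's English description precedes it below -/
import Mathlib

section
/- Let D be a real vector space, c : D × D → D skew-symmetric bilinear, and E = D × D with Lie bracket [(x,u),(y,v)] = (0,c(x,y)). Define φ : D → E by φ(x) = (x,x) and Q : E → E by Q(a,b) = (b,b). Then: (i) φ is an injective linear map; (ii) Q is linear and idempotent (Q∘Q = Q) with range equal to the image of φ; (iii) for all x,y ∈ D, Q([φ(x),φ(y)]) = φ(c(x,y)). Hence the nonholonomic reduction of the Lie bracket of E along the projection Q recovers the original bracket c on D. -/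
/-! The maps are the diagonal embedding `φ = Function.diag` and the projection
`Q = φ ∘ Prod.snd`. Since `Prod.snd ∘ φ = id`, `Q` is idempotent, and since `Prod.snd` is
surjective, `Q` and `φ` have the same range. The bracket of `E` takes values in `0 × D`, where
`Q` reads off the second component `c x y`. -/

theorem Function.diag_comp_snd_idempotent {α : Type*} :
    (Function.diag ∘ Prod.snd) ∘ (Function.diag ∘ Prod.snd) =
      (Function.diag ∘ Prod.snd : α × α → α × α) := by
  rw [Function.comp_assoc, ← Function.comp_assoc Prod.snd, Function.snd_comp_diag,
    Function.id_comp]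

theorem Function.range_diag_comp_snd {α β : Type*} [Nonempty α] :
    Set.range (Function.diag ∘ (Prod.snd : α × β → β)) = Set.range Function.diag :=
  Prod.snd_surjective.range_comp _

theorem nonholonomic_reduction_recovers_bracket_general
    (D : Type*) [AddCommGroup D] [Module ℝ D]
    (c : D →ₗ[ℝ] D →ₗ[ℝ] D) :
    let br : D × D → D × D → D × D := fun p q => (0, c p.1 q.1)
    let φ : D → D × D := fun x => (x, x)
    let Q : D × D → D × D := fun p => (p.2, p.2)
    -- (i) φ is an injective linear map
    (Function.Injective φ) ∧
    (∀ (a : ℝ) (x y : D), φ (a • x + y) = a • φ x + φ y) ∧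
    -- (ii) Q is linear, idempotent, with range equal to the image of φ
    (∀ (a : ℝ) (p q : D × D), Q (a • p + q) = a • Q p + Q q) ∧
    (Q ∘ Q = Q) ∧
    (Set.range Q = Set.range φ) ∧
    -- (iii) the reduced bracket recovers c
    (∀ x y : D, Q (br (φ x) (φ y)) = φ (c x y)) := by
  intro br φ Q
  exact ⟨Function.diag_injective, fun _ _ _ => rfl, fun _ _ _ => rfl,
    Function.diag_comp_snd_idempotent, Function.range_diag_comp_snd, fun _ _ => rfl⟩

/-- Embedding the quasi-Lie algebra `D` into the 2-step nilpotent Lie algebra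
`E = D × D` by `φ x = (x,x)`, with projection `Q (a,b) = (b,b)`, the
nonholonomic reduction `Q ∘ [·,·]` recovers the original bracket `c`. -/
theorem nonholonomic_reduction_recovers_bracket
    (D : Type*) [AddCommGroup D] [Module ℝ D]
    (c : D →ₗ[ℝ] D →ₗ[ℝ] D)
    (hskew : ∀ x y : D, c x y = - c y x) :
    let br : D × D → D × D → D × D := fun p q => (0, c p.1 q.1)
    let φ : D → D × D := fun x => (x, x)
    let Q : D × D → D × D := fun p => (p.2, p.2)
    -- (i) φ is an injective linear map
    (Function.Injective φ) ∧
    (∀ (a : ℝ) (x y : D), φ (a • x + y) = a • φ x + φ y) ∧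
    -- (ii) Q is linear, idempotent, with range equal to the image of φ
    (∀ (a : ℝ) (p q : D × D), Q (a • p + q) = a • Q p + Q q) ∧
    (Q ∘ Q = Q) ∧
    (Set.range Q = Set.range φ) ∧
    -- (iii) the reduced bracket recovers c
    (∀ x y : D, Q (br (φ x) (φ y)) = φ (c x y)) :=
  nonholonomic_reduction_recovers_bracket_general D c
end

section
/- Every finite-dimensional quasi-Lie algebra is a nonholonomic reduction of a Lie algebra: if D is a finite-dimensional real vector space equipped with a skew-symmetric bilinear bracket c : D × D → D (not necessarily satisfying Jacobi), then there exist a finite-dimensional real Lie algebra (E, [·,·]_E), an injective linear map φ : D → E, and a linear projection P : E → E with P∘P = P and range(P) = φ(D), such that P([φ(x),φ(y)]_E) = φ(c(x,y)) for all x,y ∈ D. -/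
/-!
Give `D × D` the bracket `⁅(x, a), (y, b)⁆ = (0, c x y)`. This is the central extension of the
abelian Lie algebra `D` by the trivial module `D` along `c`: on an abelian Lie algebra every
alternating form is a 2-cocycle, so Jacobi holds although `c` itself need not satisfy it.
Embed `D` diagonally, `x ↦ (x, x)`, and project by `(a, b) ↦ (b, b)`; then
`P ⁅(x, x), (y, y)⁆ = P (0, c x y) = (c x y, c x y)`.
-/

open LieAlgebra LieModule.Cohomology

def AbelianLieAlgebra (M : Type*) := M

namespace AbelianLieAlgebra

variable (R M : Type*) [CommRing R] [AddCommGroup M] [Module R M]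

instance : AddCommGroup (AbelianLieAlgebra M) := inferInstanceAs (AddCommGroup M)

instance : Module R (AbelianLieAlgebra M) := inferInstanceAs (Module R M)

instance : LieRing (AbelianLieAlgebra M) where
  bracket _ _ := 0
  add_lie _ _ _ := (add_zero 0).symm
  lie_add _ _ _ := (add_zero 0).symm
  lie_self _ := rfl
  leibniz_lie _ _ _ := (add_zero 0).symm

instance : IsLieAbelian (AbelianLieAlgebra M) where
  trivial _ _ := rfl

instance : LieAlgebra R (AbelianLieAlgebra M) where
  lie_smul _ _ _ := (smul_zero _).symm

def of : M ≃ₗ[R] AbelianLieAlgebra M := LinearEquiv.refl R M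

end AbelianLieAlgebra

namespace LinearMap

variable {R M N E : Type*} [CommRing R] [AddCommGroup M] [Module R M] [AddCommGroup N] [Module R N]
  [AddCommGroup E] [Module R E]

theorem isAlt_of_skew [IsAddTorsionFree N] {c : M →ₗ[R] M →ₗ[R] N}
    (hc : ∀ x y, c x y = -c y x) : c.IsAlt :=
  fun x ↦ self_eq_neg.mp (hc x x)

section Retraction

variable {f : M →ₗ[R] E} {g : E →ₗ[R] M} (h : g ∘ₗ f = id)
include h

theorem comp_comp_self_of_comp_eq_id : (f ∘ₗ g) ∘ₗ (f ∘ₗ g) = f ∘ₗ g := by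
  rw [comp_assoc, ← comp_assoc g f g, h, id_comp]

theorem range_comp_of_comp_eq_id : range (f ∘ₗ g) = range f :=
  range_comp_of_range_eq_top f <| range_eq_top_of_surjective g <| surjective_of_comp_eq_id f g h

end Retraction

end LinearMap

section IsLieAbelian

variable {R L M : Type*} [CommRing R] [LieRing L] [LieAlgebra R L] [IsLieAbelian L]
  [AddCommGroup M] [Module R M] [LieRingModule L M] [LieModule R L M] [LieModule.IsTrivial L M]

theorem LieModule.Cohomology.mem_twoCocycle_of_isLieAbelian (c : twoCochain R L M) :
    c ∈ twoCocycle R L M :=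
  (mem_twoCocycle_iff_of_trivial ..).mpr fun x y z ↦ by
    simp only [trivial_lie_zero, map_zero, LinearMap.zero_apply, add_zero]

theorem LieAlgebra.lie_ofProd_of_isLieAbelian (c : twoCocycle R L M) (p q : L × M) :
    ⁅ofProd c p, ofProd c q⁆ = ofProd c (0, (c : L →ₗ[R] L →ₗ[R] M) p.1 q.1) := by
  simp [bracket_ofTwoCocycle, trivial_lie_zero]

end IsLieAbelian

namespace LinearMap.IsAlt

open AbelianLieAlgebra

variable {R M N : Type*} [CommRing R] [AddCommGroup M] [Module R M] [AddCommGroup N] [Module R N]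
  {c : M →ₗ[R] M →ₗ[R] N} (hc : c.IsAlt)

local notation "L" => AbelianLieAlgebra M
local notation "V" => TrivialLieModule R (AbelianLieAlgebra M) N

def toTwoCocycle : twoCocycle R L V :=
  ⟨⟨(c.compl₁₂ (of R M).symm.toLinearMap (of R M).symm.toLinearMap).compr₂
      (TrivialLieModule.equiv R L N).symm.toLinearMap,
    fun x ↦ by simp [hc.self_eq_zero]⟩, mem_twoCocycle_of_isLieAbelian _⟩

abbrev CentralExtension := ofTwoCocycle hc.toTwoCocycle

def equivProd : hc.CentralExtension ≃ₗ[R] M × N :=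
  (ofProd _).symm.linearEquiv R ≪≫ₗ (of R M).symm.prodCongr (TrivialLieModule.equiv R L N)

theorem equivProd_symm_apply (p : M × N) :
    hc.equivProd.symm p = ofProd _ (of R M p.1, (TrivialLieModule.equiv R L N).symm p.2) :=
  rfl

theorem lie_equivProd_symm (p q : M × N) :
    ⁅hc.equivProd.symm p, hc.equivProd.symm q⁆ = hc.equivProd.symm (0, c p.1 q.1) := by
  rw [equivProd_symm_apply, equivProd_symm_apply, lie_ofProd_of_isLieAbelian]
  rfl

end LinearMap.IsAlt

/-- Every finite-dimensional quasi-Lie algebra is a nonholonomic reduction of a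
(finite-dimensional) Lie algebra. -/
theorem quasiLie_is_nonholonomic_reduction_of_Lie
    (D : Type) [AddCommGroup D] [Module ℝ D] [FiniteDimensional ℝ D]
    (c : D →ₗ[ℝ] D →ₗ[ℝ] D)
    (hskew : ∀ x y : D, c x y = - c y x) :
    ∃ (E : Type) (_ : LieRing E) (_ : LieAlgebra ℝ E),
      FiniteDimensional ℝ E ∧
      ∃ (φ : D →ₗ[ℝ] E) (P : E →ₗ[ℝ] E),
        Function.Injective φ ∧
        P ∘ₗ P = P ∧
        LinearMap.range P = LinearMap.range φ ∧
        ∀ x y : D, P ⁅φ x, φ y⁆ = φ (c x y) := by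
  have : IsAddTorsionFree D := .of_isTorsionFree ℝ D
  have hc : c.IsAlt := LinearMap.isAlt_of_skew hskew
  let π := hc.equivProd
  let φ : D →ₗ[ℝ] hc.CentralExtension := π.symm ∘ₗ LinearMap.id.prod LinearMap.id
  let ψ : hc.CentralExtension →ₗ[ℝ] D := LinearMap.snd ℝ D D ∘ₗ π.toLinearMap
  have hψφ : ψ ∘ₗ φ = LinearMap.id := by ext; simp [φ, ψ]
  refine ⟨hc.CentralExtension, inferInstance, inferInstance, π.symm.finiteDimensional, φ, φ ∘ₗ ψ,
    LinearMap.injective_of_comp_eq_id φ ψ hψφ,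
    LinearMap.comp_comp_self_of_comp_eq_id hψφ, LinearMap.range_comp_of_comp_eq_id hψφ,
    fun x y ↦ ?_⟩
  simp [φ, ψ, π, hc.lie_equivProd_symm]
end

section
/- Let J, m, a, b be real numbers with J + m·a² ≠ 0. In the Lie algebra se(2) with basis E1, E2, E3 satisfying [E3,E1]=E2, [E2,E3]=E1, [E1,E2]=0, set e1 = E3, e2 = E1, e3 = −m·a·E3 − m·a·b·E1 + (J+m·a²)·E2, and let D = span{e1,e2}. Then {e1,e2,e3} is a basis of se(2), and if P : se(2) → D denotes the projection with kernel span{e3}, the reduced bracket satisfies P([e1,e2]) = (m·a/(J+m·a²))·e1 + (m·a·b/(J+m·a²))·e2. -/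
/-!
Since `[e1, e2] = [E3, E1] = E2` and `e3 = -(m a) e1 - (m a b) e2 + (J + m a²) E2`, solving the
last relation for `E2` and applying `P` (which fixes `e1`, `e2` and kills `e3`) gives the reduced
bracket. The frame is a basis because the matrix of its coordinates has determinant `J + m a²`.
-/

/-- se(2) realized on ℝ³: a vector `u` represents `u 0 • E1 + u 1 • E2 + u 2 • E3`,
and the bracket is determined by `[E3,E1]=E2`, `[E2,E3]=E1`, `[E1,E2]=0`. -/
noncomputable def se2br (u v : Fin 3 → ℝ) : Fin 3 → ℝ :=
  ![u 1 * v 2 - u 2 * v 1, u 2 * v 0 - u 0 * v 2, 0]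

theorem Matrix.span_rows_eq_top_of_det_ne_zero {K n : Type*} [Field K] [Fintype n]
    [DecidableEq n] {A : Matrix n n K} (hA : A.det ≠ 0) : Submodule.span K (Set.range A) = ⊤ :=
  (linearIndependent_rows_of_det_ne_zero hA).span_eq_top_of_card_eq_finrank' (by simp)

theorem LinearMap.apply_eq_smul_add_smul_of_eq_add_smul {K V : Type*} [Field K] [AddCommGroup V]
    [Module K V] (P : V →ₗ[K] V) {u v w z : V} {x y c : K} (hc : c ≠ 0)
    (hu : P u = u) (hv : P v = v) (hw : P w = 0) (hz : w = -x • u - y • v + c • z) :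
    P z = (x / c) • u + (y / c) • v := by
  have hcz : c • z = w + x • u + y • v := by rw [hz]; module
  rw [← inv_smul_smul₀ hc z, hcz, map_smul, map_add, map_add, map_smul, map_smul, hu, hv, hw]
  module

noncomputable def chaplyginFrame (J m a b : ℝ) : Matrix (Fin 3) (Fin 3) ℝ :=
  !![0, 0, 1; 1, 0, 0; -(m * a * b), J + m * a ^ 2, -(m * a)]

theorem det_chaplyginFrame (J m a b : ℝ) : (chaplyginFrame J m a b).det = J + m * a ^ 2 := by
  simp [chaplyginFrame, Matrix.det_fin_three]

theorem se2br_E3_E1 : se2br ![0, 0, 1] ![1, 0, 0] = ![0, 1, 0] := by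
  ext i
  fin_cases i <;> simp [se2br]

/-- Chaplygin sleigh: `{e1,e2,e3}` is a basis of se(2) adapted to `D ⊕ D^⊥`, and
the reduced bracket along the projection `P` with kernel `span{e3}` satisfies
`P [e1,e2] = (ma/(J+ma²)) e1 + (mab/(J+ma²)) e2`. -/
theorem chaplygin_sleigh_reduced_bracket
    (J m a b : ℝ) (h : J + m * a ^ 2 ≠ 0) :
    let E1 : Fin 3 → ℝ := ![1, 0, 0]
    let E2 : Fin 3 → ℝ := ![0, 1, 0]
    let E3 : Fin 3 → ℝ := ![0, 0, 1]
    let e1 : Fin 3 → ℝ := E3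
    let e2 : Fin 3 → ℝ := E1
    let e3 : Fin 3 → ℝ := -(m * a) • E3 - (m * a * b) • E1 + (J + m * a ^ 2) • E2
    -- {e1,e2,e3} is a basis of se(2)
    (LinearIndependent ℝ ![e1, e2, e3] ∧
      Submodule.span ℝ {e1, e2, e3} = ⊤) ∧
    -- the reduced bracket along the projection onto D = span{e1,e2} with kernel span{e3}
    (∀ P : (Fin 3 → ℝ) →ₗ[ℝ] (Fin 3 → ℝ),
      P e1 = e1 → P e2 = e2 → P e3 = 0 →
      P (se2br e1 e2) =
        (m * a / (J + m * a ^ 2)) • e1 + (m * a * b / (J + m * a ^ 2)) • e2) := by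
  intro E1 E2 E3 e1 e2 e3
  have hframe : ![e1, e2, e3] = chaplyginFrame J m a b := by
    ext i j
    fin_cases i <;> fin_cases j <;> simp [chaplyginFrame, e1, e2, e3, E1, E2, E3]
  have hdet : (chaplyginFrame J m a b).det ≠ 0 := det_chaplyginFrame J m a b ▸ h
  refine ⟨⟨hframe ▸ Matrix.linearIndependent_rows_of_det_ne_zero hdet, ?_⟩, ?_⟩
  · have hrange : Set.range ![e1, e2, e3] = {e1, e2, e3} := by
      rw [Matrix.range_cons, Matrix.range_cons_cons_empty, Set.singleton_union]
    rw [← hrange, hframe]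
    exact Matrix.span_rows_eq_top_of_det_ne_zero hdet
  · intro P he1 he2 he3
    rw [se2br_E3_E1]
    exact P.apply_eq_smul_add_smul_of_eq_add_smul h he1 he2 he3 rfl
end

section
/- Energy conservation for the snakeboard: let m, r, J0, J1 ∈ ℝ and let φ, y1, y2, y3 : ℝ → ℝ be differentiable functions satisfying φ' = y2, (d/dt)(y1 + sin(2φ)·y3) = 0, (d/dt)(y2) = 0, and (d/dt)(4·m·r²·cos²(φ)·y3 + J0·sin(2φ)·y1) = 2·J0·cos(2φ)·y1·y2 − 2·m·r²·sin(2φ)·y2·y3. Then the energy E(t) = 2·m·r²·cos²(φ(t))·y3(t)² + J0·sin(2φ(t))·y1(t)·y3(t) + ½·J0·y1(t)² + J1·y2(t)² is constant in t. -/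
/-!
The energy equals the Lagrangian `l = ½ yᵀ M(φ) y`, which is quadratic in the fiber velocities,
so `E = y · p - l` with `p = ∂l/∂y`. Differentiating, the `ẏ · p` terms cancel and
`dE/dt = y · ṗ - (∂l/∂φ) φ'`. The first two equations kill the `y¹` and `y²` components of
`y · ṗ`, and the third makes `y³ ṗ₃` equal to `(∂l/∂φ) y²`, which is the remaining term since
`φ' = y²`.
-/

open Real

noncomputable section

variable {m r J0 : ℝ} {φ y1 y2 y3 : ℝ → ℝ} {t dφ d1 d2 d3 : ℝ}

variable (m r J0) in
def snakeboardEnergy (J1 : ℝ) (φ y1 y2 y3 : ℝ → ℝ) (t : ℝ) : ℝ :=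
  2 * m * r ^ 2 * (cos (φ t)) ^ 2 * (y3 t) ^ 2 + J0 * sin (2 * φ t) * y1 t * y3 t
    + (1 / 2) * J0 * (y1 t) ^ 2 + J1 * (y2 t) ^ 2

/-- `∂l/∂y¹ = J0 · snakeboardMomentum1`. -/
def snakeboardMomentum1 (φ y1 y3 : ℝ → ℝ) (t : ℝ) : ℝ :=
  y1 t + sin (2 * φ t) * y3 t

variable (m r J0) in
/-- `∂l/∂y³`. -/
def snakeboardMomentum3 (φ y1 y3 : ℝ → ℝ) (t : ℝ) : ℝ :=
  4 * m * r ^ 2 * (cos (φ t)) ^ 2 * y3 t + J0 * sin (2 * φ t) * y1 t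

lemma hasDerivAt_cos_sq_comp (hφ : HasDerivAt φ dφ t) :
    HasDerivAt (fun s => cos (φ s) ^ 2) (-(sin (2 * φ t) * dφ)) t := by
  refine (hφ.cos.pow 2).congr_deriv ?_
  rw [sin_two_mul]
  ring

lemma hasDerivAt_snakeboardMomentum1 (hφ : HasDerivAt φ dφ t) (h1 : HasDerivAt y1 d1 t)
    (h3 : HasDerivAt y3 d3 t) :
    HasDerivAt (snakeboardMomentum1 φ y1 y3)
      (d1 + 2 * cos (2 * φ t) * dφ * y3 t + sin (2 * φ t) * d3) t := by
  refine (h1.add ((hφ.const_mul 2).sin.mul h3)).congr_deriv ?_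
  ring

lemma hasDerivAt_snakeboardMomentum3 (hφ : HasDerivAt φ dφ t) (h1 : HasDerivAt y1 d1 t)
    (h3 : HasDerivAt y3 d3 t) :
    HasDerivAt (snakeboardMomentum3 m r J0 φ y1 y3)
      (-(4 * m * r ^ 2 * sin (2 * φ t) * dφ * y3 t) + 4 * m * r ^ 2 * cos (φ t) ^ 2 * d3
        + 2 * J0 * cos (2 * φ t) * dφ * y1 t + J0 * sin (2 * φ t) * d1) t := by
  refine (((hasDerivAt_cos_sq_comp hφ).const_mul (4 * m * r ^ 2)).mul h3
    |>.add (((hφ.const_mul 2).sin.const_mul J0).mul h1)).congr_deriv ?_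
  ring

lemma hasDerivAt_snakeboardEnergy (J1 : ℝ) {p1' p3' : ℝ} (hφ : HasDerivAt φ dφ t)
    (h1 : HasDerivAt y1 d1 t) (h2 : HasDerivAt y2 d2 t) (h3 : HasDerivAt y3 d3 t)
    (hp1 : HasDerivAt (snakeboardMomentum1 φ y1 y3) p1' t)
    (hp3 : HasDerivAt (snakeboardMomentum3 m r J0 φ y1 y3) p3' t) :
    HasDerivAt (snakeboardEnergy m r J0 J1 φ y1 y2 y3)
      (J0 * y1 t * p1' + 2 * J1 * y2 t * d2 + y3 t * p3'
        - (2 * J0 * cos (2 * φ t) * y1 t * y3 t - 2 * m * r ^ 2 * sin (2 * φ t) * y3 t ^ 2)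
          * dφ) t := by
  have e1 := hp1.unique (hasDerivAt_snakeboardMomentum1 hφ h1 h3)
  have e3 := hp3.unique (hasDerivAt_snakeboardMomentum3 hφ h1 h3)
  refine (((hasDerivAt_cos_sq_comp hφ).const_mul (2 * m * r ^ 2)).mul (h3.pow 2)
    |>.add ((((hφ.const_mul 2).sin.const_mul J0).mul h1).mul h3)
    |>.add ((h1.pow 2).const_mul ((1 / 2) * J0))
    |>.add ((h2.pow 2).const_mul J1)).congr_deriv ?_
  simp only [Pi.mul_apply, Pi.pow_apply]
  linear_combination -J0 * y1 t * e1 - y3 t * e3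

end

/-- Energy conservation for the snakeboard: along any solution of the
nonholonomic Euler–Lagrange equations the restricted Lagrangian (energy) is
constant. -/
theorem snakeboard_energy_conservation
    (m r J0 J1 : ℝ)
    (φ y1 y2 y3 : ℝ → ℝ)
    (hφ : Differentiable ℝ φ) (hy1 : Differentiable ℝ y1)
    (hy2 : Differentiable ℝ y2) (hy3 : Differentiable ℝ y3)
    (heqφ : ∀ t : ℝ, deriv φ t = y2 t)
    (heq1 : ∀ t : ℝ, deriv (fun s => y1 s + sin (2 * φ s) * y3 s) t = 0)
    (heq2 : ∀ t : ℝ, deriv y2 t = 0)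
    (heq3 : ∀ t : ℝ,
      deriv (fun s => 4 * m * r ^ 2 * (cos (φ s)) ^ 2 * y3 s
          + J0 * sin (2 * φ s) * y1 s) t
        = 2 * J0 * cos (2 * φ t) * y1 t * y2 t
          - 2 * m * r ^ 2 * sin (2 * φ t) * y2 t * y3 t) :
    ∀ t t' : ℝ,
      2 * m * r ^ 2 * (cos (φ t)) ^ 2 * (y3 t) ^ 2
          + J0 * sin (2 * φ t) * y1 t * y3 t
          + (1 / 2) * J0 * (y1 t) ^ 2 + J1 * (y2 t) ^ 2
        = 2 * m * r ^ 2 * (cos (φ t')) ^ 2 * (y3 t') ^ 2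
          + J0 * sin (2 * φ t') * y1 t' * y3 t'
          + (1 / 2) * J0 * (y1 t') ^ 2 + J1 * (y2 t') ^ 2 := by
  have hE : ∀ t, HasDerivAt (snakeboardEnergy m r J0 J1 φ y1 y2 y3) 0 t := by
    intro t
    have hφ' : HasDerivAt φ (y2 t) t := heqφ t ▸ (hφ t).hasDerivAt
    have h2 : HasDerivAt y2 0 t := heq2 t ▸ (hy2 t).hasDerivAt
    have hp1 : HasDerivAt (snakeboardMomentum1 φ y1 y3) 0 t :=
      heq1 t ▸ (hasDerivAt_snakeboardMomentum1 hφ' (hy1 t).hasDerivAt (hy3 t).hasDerivAt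
        |>.differentiableAt.hasDerivAt)
    have hp3 : HasDerivAt (snakeboardMomentum3 m r J0 φ y1 y3)
        (2 * J0 * cos (2 * φ t) * y1 t * y2 t - 2 * m * r ^ 2 * sin (2 * φ t) * y2 t * y3 t) t :=
      heq3 t ▸ (hasDerivAt_snakeboardMomentum3 hφ' (hy1 t).hasDerivAt (hy3 t).hasDerivAt
        |>.differentiableAt.hasDerivAt)
    refine (hasDerivAt_snakeboardEnergy J1 hφ' (hy1 t).hasDerivAt h2 (hy3 t).hasDerivAt
      hp1 hp3).congr_deriv ?_
    ring
  exact is_const_of_deriv_eq_zero (fun t => (hE t).differentiableAt) fun t => (hE t).deriv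
end
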